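/- Let H be a bialgebra over a commutative ring 𝓡 equipped with a cobraiding (co-R-matrix) ρ : H ⊗ H → 𝓡, and let M and N be left comodule-algebras over H. Then the braided tensor product M ⊗̲ N, with underlying module M ⊗ N and multiplication (x ⊗ y)(z ⊗ t) = Σ_{(z)(y)} ρ(z' ⊗ y') (x z'') ⊗ (y'' t) (Sweedler notation for the coactions on z and y), is an associative unital 𝓡-algebra with unit 1 ⊗ 1. -/
import Mathlib


open scoped TensorProduct
open TensorProduct

noncomputable section

variable (𝓡 : Type*) [CommRing 𝓡]
variable (H : Type*) [Ring H] [Algebra 𝓡 H]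
variable (M : Type*) [Ring M] [Algebra 𝓡 M]
variable (N : Type*) [Ring N] [Algebra 𝓡 N]

/-- `x ⊗ y ↦ Σ (x' ⊗ y') ⊗ (x'' ⊗ y'')`: both comultiplications followed by the
middle-four exchange. -/
def sweedlerPair (comul : H →ₗ[𝓡] H ⊗[𝓡] H) :
    H ⊗[𝓡] H →ₗ[𝓡] (H ⊗[𝓡] H) ⊗[𝓡] (H ⊗[𝓡] H) :=
  (tensorTensorTensorComm 𝓡 H H H H).toLinearMap ∘ₗ map comul comul

/-- Convolution product of two bilinear forms on `H`:
`(f * g)(x ⊗ y) = Σ f(x' ⊗ y') g(x'' ⊗ y'')`. -/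
def convMul (comul : H →ₗ[𝓡] H ⊗[𝓡] H) (f g : H ⊗[𝓡] H →ₗ[𝓡] 𝓡) :
    H ⊗[𝓡] H →ₗ[𝓡] 𝓡 :=
  LinearMap.mul' 𝓡 𝓡 ∘ₗ map f g ∘ₗ sweedlerPair 𝓡 H comul

/-- The braided exchange map `N ⊗ M → M ⊗ N`,
`y ⊗ z ↦ Σ ρ(z' ⊗ y') z'' ⊗ y''`. -/
def exch (ρ : H ⊗[𝓡] H →ₗ[𝓡] 𝓡) (δM : M →ₗ[𝓡] H ⊗[𝓡] M) (δN : N →ₗ[𝓡] H ⊗[𝓡] N) :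
    N ⊗[𝓡] M →ₗ[𝓡] M ⊗[𝓡] N :=
  (TensorProduct.comm 𝓡 N M).toLinearMap ∘ₗ
    (TensorProduct.lid 𝓡 (N ⊗[𝓡] M)).toLinearMap ∘ₗ
    map (ρ ∘ₗ (TensorProduct.comm 𝓡 H H).toLinearMap) LinearMap.id ∘ₗ
    (tensorTensorTensorComm 𝓡 H N H M).toLinearMap ∘ₗ map δN δM

/-- The multiplication of the braided tensor product `M ⊗̲ N`:
`(x ⊗ y) ⊗ (z ⊗ t) ↦ Σ ρ(z' ⊗ y') (x z'') ⊗ (y'' t)`. -/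
def mulBr (ρ : H ⊗[𝓡] H →ₗ[𝓡] 𝓡) (δM : M →ₗ[𝓡] H ⊗[𝓡] M) (δN : N →ₗ[𝓡] H ⊗[𝓡] N) :
    (M ⊗[𝓡] N) ⊗[𝓡] (M ⊗[𝓡] N) →ₗ[𝓡] M ⊗[𝓡] N :=
  map (LinearMap.mul' 𝓡 M) (LinearMap.mul' 𝓡 N) ∘ₗ
    (TensorProduct.assoc 𝓡 (M ⊗[𝓡] M) N N).toLinearMap ∘ₗ
    map (TensorProduct.assoc 𝓡 M M N).symm.toLinearMap LinearMap.id ∘ₗ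
    map (map LinearMap.id (exch 𝓡 H M N ρ δM δN)) LinearMap.id ∘ₗ
    map (TensorProduct.assoc 𝓡 M N M).toLinearMap LinearMap.id ∘ₗ
    (TensorProduct.assoc 𝓡 (M ⊗[𝓡] N) M N).symm.toLinearMap
set_option synthInstance.maxHeartbeats 1000000
set_option maxHeartbeats 1000000

section Aux

variable {𝓡 : Type*} [CommRing 𝓡]
variable {H : Type*} [Ring H] [Algebra 𝓡 H]
variable {M : Type*} [Ring M] [Algebra 𝓡 M]
variable {N : Type*} [Ring N] [Algebra 𝓡 N]

/-- The core of the exchange map, before applying the coactions. -/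
def Ecore (ρ : H ⊗[𝓡] H →ₗ[𝓡] 𝓡) :
    (H ⊗[𝓡] N) ⊗[𝓡] (H ⊗[𝓡] M) →ₗ[𝓡] M ⊗[𝓡] N :=
  (TensorProduct.comm 𝓡 N M).toLinearMap ∘ₗ
    (TensorProduct.lid 𝓡 (N ⊗[𝓡] M)).toLinearMap ∘ₗ
    map (ρ ∘ₗ (TensorProduct.comm 𝓡 H H).toLinearMap) LinearMap.id ∘ₗ
    (tensorTensorTensorComm 𝓡 H N H M).toLinearMap

lemma Ecore_tmul (ρ : H ⊗[𝓡] H →ₗ[𝓡] 𝓡) (h k : H) (n : N) (m : M) :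
    Ecore ρ ((h ⊗ₜ[𝓡] n) ⊗ₜ[𝓡] (k ⊗ₜ[𝓡] m)) = ρ (k ⊗ₜ[𝓡] h) • (m ⊗ₜ[𝓡] n) := by
  simp [Ecore, tensorTensorTensorComm_tmul, smul_tmul']

lemma exch_eq (ρ : H ⊗[𝓡] H →ₗ[𝓡] 𝓡) (δM : M →ₗ[𝓡] H ⊗[𝓡] M) (δN : N →ₗ[𝓡] H ⊗[𝓡] N) :
    exch 𝓡 H M N ρ δM δN = Ecore ρ ∘ₗ map δN δM := rfl

lemma mulBr_tmul (ρ : H ⊗[𝓡] H →ₗ[𝓡] 𝓡) (δM : M →ₗ[𝓡] H ⊗[𝓡] M)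
    (δN : N →ₗ[𝓡] H ⊗[𝓡] N) (x z : M) (y t : N) :
    mulBr 𝓡 H M N ρ δM δN ((x ⊗ₜ[𝓡] y) ⊗ₜ[𝓡] (z ⊗ₜ[𝓡] t))
      = map (LinearMap.mulLeft 𝓡 x) (LinearMap.mulRight 𝓡 t)
          (Ecore ρ (δN y ⊗ₜ[𝓡] δM z)) := by
  have hE : exch 𝓡 H M N ρ δM δN (y ⊗ₜ[𝓡] z) = Ecore ρ (δN y ⊗ₜ[𝓡] δM z) := by
    rw [exch_eq]; simp
  simp only [mulBr, LinearMap.comp_apply, LinearEquiv.coe_coe, assoc_symm_tmul,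
    map_tmul, LinearMap.id_coe, id_eq, assoc_tmul, hE]
  generalize Ecore ρ (δN y ⊗ₜ[𝓡] δM z) = w
  induction w using TensorProduct.induction_on with
  | zero => simp
  | tmul m n => simp [mul_comm]
  | add w₁ w₂ ih₁ ih₂ => simp only [tmul_add, add_tmul, map_add, ih₁, ih₂]

end Aux
section Conv

variable {𝓡 : Type*} [CommRing 𝓡]
variable {H : Type*} [Ring H] [Algebra 𝓡 H]

/-- Convolution of linear functionals on `H`. -/
def conv (c : H →ₗ[𝓡] H ⊗[𝓡] H) (f g : H →ₗ[𝓡] 𝓡) : H →ₗ[𝓡] 𝓡 :=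
  LinearMap.mul' 𝓡 𝓡 ∘ₗ map f g ∘ₗ c

lemma conv_apply (c : H →ₗ[𝓡] H ⊗[𝓡] H) (f g : H →ₗ[𝓡] 𝓡) (h : H) :
    conv c f g h = LinearMap.mul' 𝓡 𝓡 (map f g (c h)) := rfl

lemma conv_assoc (c : H →ₗ[𝓡] H ⊗[𝓡] H)
    (hco : ∀ h : H, (TensorProduct.assoc 𝓡 H H H) ((map c LinearMap.id) (c h))
      = (map LinearMap.id c) (c h))
    (f g k : H →ₗ[𝓡] 𝓡) :
    conv c (conv c f g) k = conv c f (conv c g k) := by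
  have A : ∀ w : H ⊗[𝓡] H, LinearMap.mul' 𝓡 𝓡 (map (conv c f g) k w)
      = LinearMap.mul' 𝓡 𝓡 (map (LinearMap.mul' 𝓡 𝓡 ∘ₗ map f g) k
          (map c LinearMap.id w)) := by
    intro w
    induction w using TensorProduct.induction_on with
    | zero => simp
    | tmul a b => simp [conv_apply]
    | add w₁ w₂ ih₁ ih₂ => simp only [map_add, ih₁, ih₂]
  have A' : ∀ w : H ⊗[𝓡] H, LinearMap.mul' 𝓡 𝓡 (map f (conv c g k) w)
      = LinearMap.mul' 𝓡 𝓡 (map f (LinearMap.mul' 𝓡 𝓡 ∘ₗ map g k)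
          (map LinearMap.id c w)) := by
    intro w
    induction w using TensorProduct.induction_on with
    | zero => simp
    | tmul a b => simp [conv_apply]
    | add w₁ w₂ ih₁ ih₂ => simp only [map_add, ih₁, ih₂]
  have B : ∀ t : (H ⊗[𝓡] H) ⊗[𝓡] H,
      LinearMap.mul' 𝓡 𝓡 (map (LinearMap.mul' 𝓡 𝓡 ∘ₗ map f g) k t)
      = LinearMap.mul' 𝓡 𝓡 (map f (LinearMap.mul' 𝓡 𝓡 ∘ₗ map g k)
          ((TensorProduct.assoc 𝓡 H H H) t)) := by
    intro t
    induction t using TensorProduct.induction_on with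
    | zero => simp
    | tmul s e =>
      induction s using TensorProduct.induction_on with
      | zero => simp
      | tmul a b => simp [mul_assoc]
      | add s₁ s₂ ih₁ ih₂ => simp only [add_tmul, map_add, ih₁, ih₂]
    | add t₁ t₂ ih₁ ih₂ => simp only [map_add, ih₁, ih₂]
  apply LinearMap.ext; intro h
  rw [conv_apply, conv_apply, A, B, hco, ← A']

lemma conv_counit_right (c : H →ₗ[𝓡] H ⊗[𝓡] H) (e : H →ₗ[𝓡] 𝓡)
    (hcr : ∀ h : H, (TensorProduct.rid 𝓡 H) ((map LinearMap.id e) (c h)) = h)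
    (f : H →ₗ[𝓡] 𝓡) : conv c f e = f := by
  have A : ∀ w : H ⊗[𝓡] H, LinearMap.mul' 𝓡 𝓡 (map f e w)
      = f ((TensorProduct.rid 𝓡 H) ((map LinearMap.id e) w)) := by
    intro w
    induction w using TensorProduct.induction_on with
    | zero => simp
    | tmul a b => simp [mul_comm]
    | add w₁ w₂ ih₁ ih₂ => simp only [map_add, ih₁, ih₂]
  apply LinearMap.ext; intro h
  rw [conv_apply, A, hcr]

lemma conv_eq_counit (c : H →ₗ[𝓡] H ⊗[𝓡] H) (e : H →ₗ[𝓡] 𝓡)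
    (hco : ∀ h : H, (TensorProduct.assoc 𝓡 H H H) ((map c LinearMap.id) (c h))
      = (map LinearMap.id c) (c h))
    (hcr : ∀ h : H, (TensorProduct.rid 𝓡 H) ((map LinearMap.id e) (c h)) = h)
    (f f' : H →ₗ[𝓡] 𝓡) (hidem : conv c f f = f) (hinv : conv c f f' = e) :
    f = e := by
  calc f = conv c f e := (conv_counit_right c e hcr f).symm
  _ = conv c f (conv c f f') := by rw [hinv]
  _ = conv c (conv c f f) f' := (conv_assoc c hco f f f').symm
  _ = conv c f f' := by rw [hidem]
  _ = e := hinv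

end Conv
section RhoOne

variable {𝓡 : Type*} [CommRing 𝓡]
variable {H : Type*} [Ring H] [Algebra 𝓡 H]

lemma auxPairL (F G : H ⊗[𝓡] H →ₗ[𝓡] 𝓡) (w : H ⊗[𝓡] H) :
    LinearMap.mul' 𝓡 𝓡 (map F G
        ((tensorTensorTensorComm 𝓡 H H H H) (((1:H) ⊗ₜ[𝓡] (1:H)) ⊗ₜ[𝓡] w)))
      = LinearMap.mul' 𝓡 𝓡 (map (F ∘ₗ mk 𝓡 H H 1) (G ∘ₗ mk 𝓡 H H 1) w) := by
  induction w using TensorProduct.induction_on with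
  | zero => simp
  | tmul a b => simp
  | add w₁ w₂ ih₁ ih₂ => simp only [tmul_add, map_add, ih₁, ih₂]

lemma auxPairR (F G : H ⊗[𝓡] H →ₗ[𝓡] 𝓡) (w : H ⊗[𝓡] H) :
    LinearMap.mul' 𝓡 𝓡 (map F G
        ((tensorTensorTensorComm 𝓡 H H H H) (w ⊗ₜ[𝓡] ((1:H) ⊗ₜ[𝓡] (1:H)))))
      = LinearMap.mul' 𝓡 𝓡 (map (F ∘ₗ (mk 𝓡 H H).flip 1) (G ∘ₗ (mk 𝓡 H H).flip 1) w) := by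
  induction w using TensorProduct.induction_on with
  | zero => simp
  | tmul a b => simp
  | add w₁ w₂ ih₁ ih₂ => simp only [add_tmul, map_add, ih₁, ih₂]

lemma auxCommHH (F G : H →ₗ[𝓡] 𝓡) (w : H ⊗[𝓡] H) :
    LinearMap.mul' 𝓡 𝓡 (map F G ((TensorProduct.comm 𝓡 H H) w))
      = LinearMap.mul' 𝓡 𝓡 (map G F w) := by
  induction w using TensorProduct.induction_on with
  | zero => simp
  | tmul a b => simp [mul_comm]
  | add w₁ w₂ ih₁ ih₂ => simp only [map_add, ih₁, ih₂]

lemma rho_one_left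
    (comul : H →ₐ[𝓡] H ⊗[𝓡] H) (counit : H →ₐ[𝓡] 𝓡)
    (hcoassoc : ∀ h : H,
      (TensorProduct.assoc 𝓡 H H H) ((map comul.toLinearMap LinearMap.id) (comul h))
        = (map LinearMap.id comul.toLinearMap) (comul h))
    (hcounit_right : ∀ h : H,
      (TensorProduct.rid 𝓡 H) ((map LinearMap.id counit.toLinearMap) (comul h)) = h)
    (ρ ρ' : H ⊗[𝓡] H →ₗ[𝓡] 𝓡)
    (hconv_inv_left : convMul 𝓡 H comul.toLinearMap ρ ρ'
      = LinearMap.mul' 𝓡 𝓡 ∘ₗ map counit.toLinearMap counit.toLinearMap)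
    (hmul_left : ρ ∘ₗ map (LinearMap.mul' 𝓡 H) LinearMap.id
      = LinearMap.mul' 𝓡 𝓡 ∘ₗ map ρ ρ ∘ₗ
          (tensorTensorTensorComm 𝓡 H H H H).toLinearMap ∘ₗ
          map LinearMap.id comul.toLinearMap) :
    ∀ h : H, ρ ((1:H) ⊗ₜ[𝓡] h) = counit h := by
  set f : H →ₗ[𝓡] 𝓡 := ρ ∘ₗ mk 𝓡 H H 1 with hf
  set f' : H →ₗ[𝓡] 𝓡 := ρ' ∘ₗ mk 𝓡 H H 1 with hf'
  have hidem : conv comul.toLinearMap f f = f := by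
    apply LinearMap.ext; intro h
    have h1 := LinearMap.congr_fun hmul_left (((1:H) ⊗ₜ[𝓡] (1:H)) ⊗ₜ[𝓡] h)
    simp only [LinearMap.comp_apply, map_tmul, LinearMap.mul'_apply, mul_one,
      LinearMap.id_apply, LinearEquiv.coe_coe, AlgHom.toLinearMap_apply] at h1
    rw [auxPairL] at h1
    rw [conv_apply]
    exact h1.symm
  have hinv : conv comul.toLinearMap f f' = counit.toLinearMap := by
    apply LinearMap.ext; intro h
    have h1 := LinearMap.congr_fun hconv_inv_left ((1:H) ⊗ₜ[𝓡] h)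
    simp only [convMul, sweedlerPair, LinearMap.comp_apply, map_tmul,
      LinearEquiv.coe_coe, AlgHom.toLinearMap_apply, map_one,
      LinearMap.mul'_apply] at h1
    rw [Algebra.TensorProduct.one_def, auxPairL] at h1
    rw [conv_apply]
    simpa using h1
  have := conv_eq_counit comul.toLinearMap counit.toLinearMap hcoassoc
    hcounit_right f f' hidem hinv
  intro h
  have := LinearMap.congr_fun this h
  simpa [hf] using this

lemma rho_one_right
    (comul : H →ₐ[𝓡] H ⊗[𝓡] H) (counit : H →ₐ[𝓡] 𝓡)
    (hcoassoc : ∀ h : H,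
      (TensorProduct.assoc 𝓡 H H H) ((map comul.toLinearMap LinearMap.id) (comul h))
        = (map LinearMap.id comul.toLinearMap) (comul h))
    (hcounit_right : ∀ h : H,
      (TensorProduct.rid 𝓡 H) ((map LinearMap.id counit.toLinearMap) (comul h)) = h)
    (ρ ρ' : H ⊗[𝓡] H →ₗ[𝓡] 𝓡)
    (hconv_inv_left : convMul 𝓡 H comul.toLinearMap ρ ρ'
      = LinearMap.mul' 𝓡 𝓡 ∘ₗ map counit.toLinearMap counit.toLinearMap)
    (hmul_right : ρ ∘ₗ map LinearMap.id (LinearMap.mul' 𝓡 H)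
      = LinearMap.mul' 𝓡 𝓡 ∘ₗ map ρ ρ ∘ₗ
          (tensorTensorTensorComm 𝓡 H H H H).toLinearMap ∘ₗ
          map ((TensorProduct.comm 𝓡 H H).toLinearMap ∘ₗ comul.toLinearMap)
            LinearMap.id) :
    ∀ h : H, ρ (h ⊗ₜ[𝓡] (1:H)) = counit h := by
  set f : H →ₗ[𝓡] 𝓡 := ρ ∘ₗ (mk 𝓡 H H).flip 1 with hf
  set f' : H →ₗ[𝓡] 𝓡 := ρ' ∘ₗ (mk 𝓡 H H).flip 1 with hf'
  have hidem : conv comul.toLinearMap f f = f := by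
    apply LinearMap.ext; intro h
    have h1 := LinearMap.congr_fun hmul_right (h ⊗ₜ[𝓡] ((1:H) ⊗ₜ[𝓡] (1:H)))
    simp only [LinearMap.comp_apply, map_tmul, LinearMap.mul'_apply, mul_one,
      LinearMap.id_apply, LinearEquiv.coe_coe, AlgHom.toLinearMap_apply] at h1
    rw [auxPairR, auxCommHH] at h1
    rw [conv_apply]
    exact h1.symm
  have hinv : conv comul.toLinearMap f f' = counit.toLinearMap := by
    apply LinearMap.ext; intro h
    have h1 := LinearMap.congr_fun hconv_inv_left (h ⊗ₜ[𝓡] (1:H))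
    simp only [convMul, sweedlerPair, LinearMap.comp_apply, map_tmul,
      LinearEquiv.coe_coe, AlgHom.toLinearMap_apply, map_one,
      LinearMap.mul'_apply] at h1
    rw [Algebra.TensorProduct.one_def, auxPairR] at h1
    rw [conv_apply]
    simpa using h1
  have := conv_eq_counit comul.toLinearMap counit.toLinearMap hcoassoc
    hcounit_right f f' hidem hinv
  intro h
  have := LinearMap.congr_fun this h
  simpa [hf] using this

end RhoOne
section Units

variable {𝓡 : Type*} [CommRing 𝓡]
variable {H : Type*} [Ring H] [Algebra 𝓡 H]
variable {M : Type*} [Ring M] [Algebra 𝓡 M]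
variable {N : Type*} [Ring N] [Algebra 𝓡 N]

lemma mulBr_one_left (counit : H →ₐ[𝓡] 𝓡) (ρ : H ⊗[𝓡] H →ₗ[𝓡] 𝓡)
    (δM : M →ₐ[𝓡] H ⊗[𝓡] M) (δN : N →ₐ[𝓡] H ⊗[𝓡] N)
    (hρr : ∀ h : H, ρ (h ⊗ₜ[𝓡] (1:H)) = counit h)
    (hδM_counit : ∀ m : M,
      (TensorProduct.lid 𝓡 M) ((map counit.toLinearMap LinearMap.id) (δM m)) = m) :
    ∀ a : M ⊗[𝓡] N,
      mulBr 𝓡 H M N ρ δM.toLinearMap δN.toLinearMap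
        (((1 : M) ⊗ₜ[𝓡] (1 : N)) ⊗ₜ[𝓡] a) = a := by
  have aux : ∀ b : H ⊗[𝓡] M, Ecore ρ (((1:H) ⊗ₜ[𝓡] (1:N)) ⊗ₜ[𝓡] b)
      = ((TensorProduct.lid 𝓡 M) ((map counit.toLinearMap LinearMap.id) b))
          ⊗ₜ[𝓡] (1:N) := by
    intro b
    induction b using TensorProduct.induction_on with
    | zero => simp
    | tmul k m => simp [Ecore_tmul, hρr, smul_tmul']
    | add b₁ b₂ ih₁ ih₂ => simp only [tmul_add, map_add, ih₁, ih₂, add_tmul]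
  intro a
  induction a using TensorProduct.induction_on with
  | zero => simp
  | tmul z t =>
    rw [mulBr_tmul]
    have h1 : δN.toLinearMap (1:N) = (1:H) ⊗ₜ[𝓡] (1:N) := by
      simp [Algebra.TensorProduct.one_def]
    rw [h1, aux]
    simp only [AlgHom.toLinearMap_apply]
    rw [hδM_counit]
    simp
  | add a₁ a₂ ih₁ ih₂ => simp only [tmul_add, map_add, ih₁, ih₂]

lemma mulBr_one_right (counit : H →ₐ[𝓡] 𝓡) (ρ : H ⊗[𝓡] H →ₗ[𝓡] 𝓡)
    (δM : M →ₐ[𝓡] H ⊗[𝓡] M) (δN : N →ₐ[𝓡] H ⊗[𝓡] N)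
    (hρl : ∀ h : H, ρ ((1:H) ⊗ₜ[𝓡] h) = counit h)
    (hδN_counit : ∀ n : N,
      (TensorProduct.lid 𝓡 N) ((map counit.toLinearMap LinearMap.id) (δN n)) = n) :
    ∀ a : M ⊗[𝓡] N,
      mulBr 𝓡 H M N ρ δM.toLinearMap δN.toLinearMap
        (a ⊗ₜ[𝓡] ((1 : M) ⊗ₜ[𝓡] (1 : N))) = a := by
  have aux : ∀ b : H ⊗[𝓡] N, Ecore ρ (b ⊗ₜ[𝓡] ((1:H) ⊗ₜ[𝓡] (1:M)))
      = (1:M) ⊗ₜ[𝓡]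
          ((TensorProduct.lid 𝓡 N) ((map counit.toLinearMap LinearMap.id) b)) := by
    intro b
    induction b using TensorProduct.induction_on with
    | zero => simp
    | tmul h n => simp [Ecore_tmul, hρl, tmul_smul]
    | add b₁ b₂ ih₁ ih₂ => simp only [add_tmul, map_add, ih₁, ih₂, tmul_add]
  intro a
  induction a using TensorProduct.induction_on with
  | zero => simp
  | tmul x y =>
    rw [mulBr_tmul]
    have h1 : δM.toLinearMap (1:M) = (1:H) ⊗ₜ[𝓡] (1:M) := by
      simp [Algebra.TensorProduct.one_def]
    rw [h1, aux]
    simp only [AlgHom.toLinearMap_apply]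
    rw [hδN_counit]
    simp
  | add a₁ a₂ ih₁ ih₂ => simp only [add_tmul, map_add, ih₁, ih₂]

end Units
section Phi

variable {𝓡 : Type*} [CommRing 𝓡]
variable {H : Type*} [Ring H] [Algebra 𝓡 H]
variable {M : Type*} [Ring M] [Algebra 𝓡 M]
variable {N : Type*} [Ring N] [Algebra 𝓡 N]

/-- Pairs `n ⊗ (m ⊗ s')` into `m ⊗ (n*s')`. -/
def phiK : N ⊗[𝓡] (M ⊗[𝓡] N) →ₗ[𝓡] M ⊗[𝓡] N :=
  map LinearMap.id (LinearMap.mul' 𝓡 N ∘ₗ (TensorProduct.comm 𝓡 N N).toLinearMap) ∘ₗ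
    (TensorProduct.assoc 𝓡 M N N).toLinearMap ∘ₗ
    (TensorProduct.comm 𝓡 N (M ⊗[𝓡] N)).toLinearMap

/-- `(c'⊗m) ⊗ ((d⊗n)⊗s') ↦ ρ(c'⊗d) • (m ⊗ (n*s'))`. -/
def phiInner (ρ : H ⊗[𝓡] H →ₗ[𝓡] 𝓡) :
    (H ⊗[𝓡] M) ⊗[𝓡] ((H ⊗[𝓡] N) ⊗[𝓡] N) →ₗ[𝓡] M ⊗[𝓡] N :=
  phiK ∘ₗ
    map ((TensorProduct.lid 𝓡 N).toLinearMap ∘ₗ map ρ LinearMap.id ∘ₗ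
          (TensorProduct.assoc 𝓡 H H N).symm.toLinearMap) LinearMap.id ∘ₗ
    (tensorTensorTensorComm 𝓡 H M (H ⊗[𝓡] N) N).toLinearMap

/-- `p ⊗ (c ⊗ (q ⊗ s)) ↦ ρ(p⊗q) * ρ(c⊗s)`. -/
def phiF (ρ : H ⊗[𝓡] H →ₗ[𝓡] 𝓡) : H ⊗[𝓡] (H ⊗[𝓡] (H ⊗[𝓡] H)) →ₗ[𝓡] 𝓡 :=
  LinearMap.mul' 𝓡 𝓡 ∘ₗ map ρ ρ ∘ₗ
    (tensorTensorTensorComm 𝓡 H H H H).toLinearMap ∘ₗ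
    (TensorProduct.assoc 𝓡 H H (H ⊗[𝓡] H)).symm.toLinearMap

/-- `p' ⊗ (m ⊗ w) ↦ (x*(p'*m)) ⊗ (w*v)`. -/
def phiG (x : M) (v : N) : M ⊗[𝓡] (M ⊗[𝓡] N) →ₗ[𝓡] M ⊗[𝓡] N :=
  map (LinearMap.mulLeft 𝓡 x ∘ₗ LinearMap.mul' 𝓡 M) (LinearMap.mulRight 𝓡 v) ∘ₗ
    (TensorProduct.assoc 𝓡 M M N).symm.toLinearMap

/-- The big evaluation map through which both sides of associativity factor. -/
def Phi (ρ : H ⊗[𝓡] H →ₗ[𝓡] 𝓡) (x : M) (v : N) :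
    (H ⊗[𝓡] M) ⊗[𝓡] ((H ⊗[𝓡] (H ⊗[𝓡] M)) ⊗[𝓡] ((H ⊗[𝓡] (H ⊗[𝓡] N)) ⊗[𝓡] (H ⊗[𝓡] N)))
      →ₗ[𝓡] M ⊗[𝓡] N :=
  (TensorProduct.lid 𝓡 (M ⊗[𝓡] N)).toLinearMap ∘ₗ
    map (phiF ρ) (phiG x v) ∘ₗ
    (tensorTensorTensorComm 𝓡 H M (H ⊗[𝓡] (H ⊗[𝓡] H)) (M ⊗[𝓡] N)).toLinearMap ∘ₗ
    map LinearMap.id (map LinearMap.id (phiInner ρ)) ∘ₗ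
    map LinearMap.id
      (tensorTensorTensorComm 𝓡 H (H ⊗[𝓡] M) (H ⊗[𝓡] H) ((H ⊗[𝓡] N) ⊗[𝓡] N)).toLinearMap ∘ₗ
    map LinearMap.id
      (map LinearMap.id (tensorTensorTensorComm 𝓡 H (H ⊗[𝓡] N) H N).toLinearMap)

lemma Phi_tmul (ρ : H ⊗[𝓡] H →ₗ[𝓡] 𝓡) (x : M) (v : N)
    (p c c' q d s : H) (p' m : M) (n s' : N) :
    Phi ρ x v ((p ⊗ₜ[𝓡] p') ⊗ₜ[𝓡] ((c ⊗ₜ[𝓡] (c' ⊗ₜ[𝓡] m)) ⊗ₜ[𝓡]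
        ((q ⊗ₜ[𝓡] (d ⊗ₜ[𝓡] n)) ⊗ₜ[𝓡] (s ⊗ₜ[𝓡] s'))))
      = (ρ (p ⊗ₜ[𝓡] q) * ρ (c ⊗ₜ[𝓡] s) * ρ (c' ⊗ₜ[𝓡] d)) •
          ((x * (p' * m)) ⊗ₜ[𝓡] ((n * s') * v)) := by
  simp [Phi, phiF, phiG, phiInner, phiK, tensorTensorTensorComm_tmul,
    smul_tmul', tmul_smul, smul_smul, mul_assoc, mul_comm, mul_left_comm]

end Phi
section Claims

variable {𝓡 : Type*} [CommRing 𝓡]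
variable {H : Type*} [Ring H] [Algebra 𝓡 H]
variable {M : Type*} [Ring M] [Algebra 𝓡 M]
variable {N : Type*} [Ring N] [Algebra 𝓡 N]

lemma claimL (comul : H →ₐ[𝓡] H ⊗[𝓡] H) (ρ : H ⊗[𝓡] H →ₗ[𝓡] 𝓡)
    (hmul_right : ρ ∘ₗ map LinearMap.id (LinearMap.mul' 𝓡 H)
      = LinearMap.mul' 𝓡 𝓡 ∘ₗ map ρ ρ ∘ₗ
          (tensorTensorTensorComm 𝓡 H H H H).toLinearMap ∘ₗ
          map ((TensorProduct.comm 𝓡 H H).toLinearMap ∘ₗ comul.toLinearMap)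
            LinearMap.id)
    (x p' : M) (v : N) (p q : H) (β T : H ⊗[𝓡] N) (W : H ⊗[𝓡] M) :
    ρ (p ⊗ₜ[𝓡] q) • (map (LinearMap.mulLeft 𝓡 (x * p')) (LinearMap.mulRight 𝓡 v))
        (Ecore ρ ((β * T) ⊗ₜ[𝓡] W))
      = Phi ρ x v ((p ⊗ₜ[𝓡] p') ⊗ₜ[𝓡]
          (((TensorProduct.assoc 𝓡 H H M) ((map comul.toLinearMap LinearMap.id) W)) ⊗ₜ[𝓡]
            ((q ⊗ₜ[𝓡] β) ⊗ₜ[𝓡] T))) := by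
  induction W using TensorProduct.induction_on with
  | zero => simp
  | add W₁ W₂ ih₁ ih₂ =>
    simp only [map_add, tmul_add, add_tmul, smul_add, ih₁, ih₂]
  | tmul r m =>
    induction β using TensorProduct.induction_on with
    | zero => simp
    | add β₁ β₂ ih₁ ih₂ =>
      simp only [add_mul, map_add, tmul_add, add_tmul, smul_add, ih₁, ih₂]
    | tmul d n =>
      induction T using TensorProduct.induction_on with
      | zero => simp
      | add T₁ T₂ ih₁ ih₂ =>
        simp only [mul_add, map_add, tmul_add, add_tmul, smul_add, ih₁, ih₂]
      | tmul s s' =>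
        rw [Algebra.TensorProduct.tmul_mul_tmul, Ecore_tmul]
        have hr := LinearMap.congr_fun hmul_right (r ⊗ₜ[𝓡] (d ⊗ₜ[𝓡] s))
        simp only [LinearMap.comp_apply, map_tmul, LinearMap.mul'_apply,
          LinearMap.id_coe, id_eq, LinearEquiv.coe_coe,
          AlgHom.toLinearMap_apply] at hr
        rw [map_smul, map_tmul, hr]
        simp only [map_tmul, LinearMap.id_coe, id_eq, AlgHom.toLinearMap_apply,
          LinearEquiv.coe_coe, assoc_tmul]
        generalize comul r = γ
        induction γ using TensorProduct.induction_on with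
        | zero => simp
        | add γ₁ γ₂ ih₁ ih₂ =>
          simp only [map_add, add_tmul, tmul_add, smul_add, add_smul, ih₁, ih₂]
        | tmul cc cc' =>
          simp only [comm_tmul, tensorTensorTensorComm_tmul, map_tmul,
            LinearMap.mul'_apply, LinearMap.mulLeft_apply, LinearMap.mulRight_apply,
            assoc_tmul]
          rw [Phi_tmul, smul_smul, mul_assoc x p' m]
          congr 1
          ring

lemma claimR (comul : H →ₐ[𝓡] H ⊗[𝓡] H) (ρ : H ⊗[𝓡] H →ₗ[𝓡] 𝓡)
    (hmul_left : ρ ∘ₗ map (LinearMap.mul' 𝓡 H) LinearMap.id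
      = LinearMap.mul' 𝓡 𝓡 ∘ₗ map ρ ρ ∘ₗ
          (tensorTensorTensorComm 𝓡 H H H H).toLinearMap ∘ₗ
          map LinearMap.id comul.toLinearMap)
    (x : M) (v s' : N) (r s : H) (μ A : H ⊗[𝓡] M) (B : H ⊗[𝓡] N) :
    ρ (r ⊗ₜ[𝓡] s) • (map (LinearMap.mulLeft 𝓡 x) (LinearMap.mulRight 𝓡 (s' * v)))
        (Ecore ρ (B ⊗ₜ[𝓡] (A * μ)))
      = Phi ρ x v (A ⊗ₜ[𝓡] ((r ⊗ₜ[𝓡] μ) ⊗ₜ[𝓡]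
          (((TensorProduct.assoc 𝓡 H H N) ((map comul.toLinearMap LinearMap.id) B))
            ⊗ₜ[𝓡] (s ⊗ₜ[𝓡] s')))) := by
  induction A using TensorProduct.induction_on with
  | zero => simp
  | add A₁ A₂ ih₁ ih₂ =>
    simp only [add_mul, map_add, tmul_add, add_tmul, smul_add, ih₁, ih₂]
  | tmul pp pp' =>
    induction μ using TensorProduct.induction_on with
    | zero => simp
    | add μ₁ μ₂ ih₁ ih₂ =>
      simp only [mul_add, map_add, tmul_add, add_tmul, smul_add, ih₁, ih₂]
    | tmul e e' =>
      induction B using TensorProduct.induction_on with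
      | zero => simp
      | add B₁ B₂ ih₁ ih₂ =>
        simp only [map_add, tmul_add, add_tmul, smul_add, ih₁, ih₂]
      | tmul q n =>
        rw [Algebra.TensorProduct.tmul_mul_tmul, Ecore_tmul]
        have hl := LinearMap.congr_fun hmul_left ((pp ⊗ₜ[𝓡] e) ⊗ₜ[𝓡] q)
        simp only [LinearMap.comp_apply, map_tmul, LinearMap.mul'_apply,
          LinearMap.id_coe, id_eq, LinearEquiv.coe_coe,
          AlgHom.toLinearMap_apply] at hl
        rw [map_smul, map_tmul, hl]
        simp only [map_tmul, LinearMap.id_coe, id_eq, AlgHom.toLinearMap_apply,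
          LinearEquiv.coe_coe]
        generalize comul q = γ
        induction γ using TensorProduct.induction_on with
        | zero => simp
        | add γ₁ γ₂ ih₁ ih₂ =>
          simp only [map_add, add_tmul, tmul_add, smul_add, add_smul, ih₁, ih₂]
        | tmul f f' =>
          simp only [tensorTensorTensorComm_tmul, map_tmul,
            LinearMap.mul'_apply, LinearMap.mulLeft_apply, LinearMap.mulRight_apply,
            assoc_tmul]
          rw [Phi_tmul, smul_smul, ← mul_assoc n s' v]
          congr 1
          ring

end Claims
section Mains

variable {𝓡 : Type*} [CommRing 𝓡]
variable {H : Type*} [Ring H] [Algebra 𝓡 H]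
variable {M : Type*} [Ring M] [Algebra 𝓡 M]
variable {N : Type*} [Ring N] [Algebra 𝓡 N]

lemma mainL (comul : H →ₐ[𝓡] H ⊗[𝓡] H) (ρ : H ⊗[𝓡] H →ₗ[𝓡] 𝓡)
    (hmul_right : ρ ∘ₗ map LinearMap.id (LinearMap.mul' 𝓡 H)
      = LinearMap.mul' 𝓡 𝓡 ∘ₗ map ρ ρ ∘ₗ
          (tensorTensorTensorComm 𝓡 H H H H).toLinearMap ∘ₗ
          map ((TensorProduct.comm 𝓡 H H).toLinearMap ∘ₗ comul.toLinearMap)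
            LinearMap.id)
    (δM : M →ₐ[𝓡] H ⊗[𝓡] M) (δN : N →ₐ[𝓡] H ⊗[𝓡] N)
    (x z u : M) (y t v : N) :
    mulBr 𝓡 H M N ρ δM.toLinearMap δN.toLinearMap
        ((mulBr 𝓡 H M N ρ δM.toLinearMap δN.toLinearMap
            ((x ⊗ₜ[𝓡] y) ⊗ₜ[𝓡] (z ⊗ₜ[𝓡] t))) ⊗ₜ[𝓡] (u ⊗ₜ[𝓡] v))
      = Phi ρ x v ((δM z) ⊗ₜ[𝓡]
          (((TensorProduct.assoc 𝓡 H H M) ((map comul.toLinearMap LinearMap.id) (δM u)))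
            ⊗ₜ[𝓡] (((map LinearMap.id δN.toLinearMap) (δN y)) ⊗ₜ[𝓡] (δN t)))) := by
  rw [mulBr_tmul]
  have sub : ∀ (B : H ⊗[𝓡] N) (A : H ⊗[𝓡] M),
      mulBr 𝓡 H M N ρ δM.toLinearMap δN.toLinearMap
          ((map (LinearMap.mulLeft 𝓡 x) (LinearMap.mulRight 𝓡 t)
              (Ecore ρ (B ⊗ₜ[𝓡] A))) ⊗ₜ[𝓡] (u ⊗ₜ[𝓡] v))
        = Phi ρ x v (A ⊗ₜ[𝓡]
            (((TensorProduct.assoc 𝓡 H H M)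
                ((map comul.toLinearMap LinearMap.id) (δM u))) ⊗ₜ[𝓡]
              (((map LinearMap.id δN.toLinearMap) B) ⊗ₜ[𝓡] (δN t)))) := by
    intro B
    induction B using TensorProduct.induction_on with
    | zero => intro A; simp
    | add B₁ B₂ ih₁ ih₂ =>
      intro A
      simp only [map_add, tmul_add, add_tmul, ih₁, ih₂]
    | tmul qq q' =>
      intro A
      induction A using TensorProduct.induction_on with
      | zero => simp
      | add A₁ A₂ ih₁ ih₂ =>
        simp only [map_add, tmul_add, add_tmul, ih₁, ih₂]
      | tmul pp p' =>
        rw [Ecore_tmul, map_smul, ← smul_tmul', map_smul, map_tmul]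
        simp only [LinearMap.mulLeft_apply, LinearMap.mulRight_apply]
        rw [mulBr_tmul]
        simp only [AlgHom.toLinearMap_apply]
        have hmul : δN (q' * t) = δN q' * δN t := map_mul δN q' t
        rw [hmul]
        have := claimL comul ρ hmul_right x p' v pp qq (δN q') (δN t) (δM u)
        rw [this]
        simp [AlgHom.toLinearMap_apply]
  simp only [AlgHom.toLinearMap_apply]
  exact sub (δN y) (δM z)

lemma mainR (comul : H →ₐ[𝓡] H ⊗[𝓡] H) (ρ : H ⊗[𝓡] H →ₗ[𝓡] 𝓡)
    (hmul_left : ρ ∘ₗ map (LinearMap.mul' 𝓡 H) LinearMap.id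
      = LinearMap.mul' 𝓡 𝓡 ∘ₗ map ρ ρ ∘ₗ
          (tensorTensorTensorComm 𝓡 H H H H).toLinearMap ∘ₗ
          map LinearMap.id comul.toLinearMap)
    (δM : M →ₐ[𝓡] H ⊗[𝓡] M) (δN : N →ₐ[𝓡] H ⊗[𝓡] N)
    (x z u : M) (y t v : N) :
    mulBr 𝓡 H M N ρ δM.toLinearMap δN.toLinearMap
        ((x ⊗ₜ[𝓡] y) ⊗ₜ[𝓡] (mulBr 𝓡 H M N ρ δM.toLinearMap δN.toLinearMap
            ((z ⊗ₜ[𝓡] t) ⊗ₜ[𝓡] (u ⊗ₜ[𝓡] v))))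
      = Phi ρ x v ((δM z) ⊗ₜ[𝓡]
          (((map LinearMap.id δM.toLinearMap) (δM u)) ⊗ₜ[𝓡]
            (((TensorProduct.assoc 𝓡 H H N) ((map comul.toLinearMap LinearMap.id) (δN y)))
              ⊗ₜ[𝓡] (δN t)))) := by
  rw [mulBr_tmul ρ δM.toLinearMap δN.toLinearMap z u t v]
  have sub : ∀ (T : H ⊗[𝓡] N) (W : H ⊗[𝓡] M),
      mulBr 𝓡 H M N ρ δM.toLinearMap δN.toLinearMap
          ((x ⊗ₜ[𝓡] y) ⊗ₜ[𝓡] (map (LinearMap.mulLeft 𝓡 z) (LinearMap.mulRight 𝓡 v)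
              (Ecore ρ (T ⊗ₜ[𝓡] W))))
        = Phi ρ x v ((δM z) ⊗ₜ[𝓡]
            (((map LinearMap.id δM.toLinearMap) W) ⊗ₜ[𝓡]
              (((TensorProduct.assoc 𝓡 H H N)
                  ((map comul.toLinearMap LinearMap.id) (δN y))) ⊗ₜ[𝓡] T))) := by
    intro T
    induction T using TensorProduct.induction_on with
    | zero => intro W; simp
    | add T₁ T₂ ih₁ ih₂ =>
      intro W
      simp only [map_add, tmul_add, add_tmul, ih₁, ih₂]
    | tmul ss s' =>
      intro W
      induction W using TensorProduct.induction_on with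
      | zero => simp
      | add W₁ W₂ ih₁ ih₂ =>
        simp only [map_add, tmul_add, add_tmul, ih₁, ih₂]
      | tmul rr m =>
        rw [Ecore_tmul, map_smul, tmul_smul, map_smul, map_tmul]
        simp only [LinearMap.mulLeft_apply, LinearMap.mulRight_apply]
        rw [mulBr_tmul]
        simp only [AlgHom.toLinearMap_apply]
        have hmul : δM (z * m) = δM z * δM m := map_mul δM z m
        rw [hmul]
        have := claimR comul ρ hmul_left x v s' rr ss (δM m) (δM z) (δN y)
        rw [this]
        simp [AlgHom.toLinearMap_apply]
  simp only [AlgHom.toLinearMap_apply]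
  exact sub (δN t) (δM u)

end Mains

/-- If `H` is a bialgebra over a commutative ring `𝓡` equipped with a cobraiding
`ρ : H ⊗ H → 𝓡`, and `M`, `N` are left comodule-algebras over `H`, then the braided
tensor product `M ⊗̲ N`, with multiplication
`(x ⊗ y)(z ⊗ t) = Σ ρ(z' ⊗ y') (x z'') ⊗ (y'' t)`, is an associative unital
`𝓡`-algebra with unit `1 ⊗ 1`. -/
theorem braidedTensorProduct_isAssociativeUnital
    -- bialgebra structure on `H`: comultiplication and counit are algebra maps
    (comul : H →ₐ[𝓡] H ⊗[𝓡] H) (counit : H →ₐ[𝓡] 𝓡)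
    (hcoassoc : ∀ h : H,
      (TensorProduct.assoc 𝓡 H H H) ((map comul.toLinearMap LinearMap.id) (comul h))
        = (map LinearMap.id comul.toLinearMap) (comul h))
    (hcounit_left : ∀ h : H,
      (TensorProduct.lid 𝓡 H) ((map counit.toLinearMap LinearMap.id) (comul h)) = h)
    (hcounit_right : ∀ h : H,
      (TensorProduct.rid 𝓡 H) ((map LinearMap.id counit.toLinearMap) (comul h)) = h)
    -- the cobraiding `ρ` and its convolution inverse `ρ'`
    (ρ ρ' : H ⊗[𝓡] H →ₗ[𝓡] 𝓡)
    (hconv_inv_left : convMul 𝓡 H comul.toLinearMap ρ ρ'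
      = LinearMap.mul' 𝓡 𝓡 ∘ₗ map counit.toLinearMap counit.toLinearMap)
    (hconv_inv_right : convMul 𝓡 H comul.toLinearMap ρ' ρ
      = LinearMap.mul' 𝓡 𝓡 ∘ₗ map counit.toLinearMap counit.toLinearMap)
    -- `ρ(xy ⊗ z) = Σ ρ(x ⊗ z') ρ(y ⊗ z'')`
    (hmul_left : ρ ∘ₗ map (LinearMap.mul' 𝓡 H) LinearMap.id
      = LinearMap.mul' 𝓡 𝓡 ∘ₗ map ρ ρ ∘ₗ
          (tensorTensorTensorComm 𝓡 H H H H).toLinearMap ∘ₗ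
          map LinearMap.id comul.toLinearMap)
    -- `ρ(x ⊗ yz) = Σ ρ(x'' ⊗ y) ρ(x' ⊗ z)`
    (hmul_right : ρ ∘ₗ map LinearMap.id (LinearMap.mul' 𝓡 H)
      = LinearMap.mul' 𝓡 𝓡 ∘ₗ map ρ ρ ∘ₗ
          (tensorTensorTensorComm 𝓡 H H H H).toLinearMap ∘ₗ
          map ((TensorProduct.comm 𝓡 H H).toLinearMap ∘ₗ comul.toLinearMap)
            LinearMap.id)
    -- `Σ ρ(x' ⊗ y') y'' x'' = Σ x' y' ρ(x'' ⊗ y'')`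
    (hexchange : (TensorProduct.lid 𝓡 H).toLinearMap ∘ₗ
          map ρ (LinearMap.mul' 𝓡 H ∘ₗ (TensorProduct.comm 𝓡 H H).toLinearMap) ∘ₗ
          sweedlerPair 𝓡 H comul.toLinearMap
      = (TensorProduct.rid 𝓡 H).toLinearMap ∘ₗ map (LinearMap.mul' 𝓡 H) ρ ∘ₗ
          sweedlerPair 𝓡 H comul.toLinearMap)
    -- `M` and `N` are left comodule-algebras: the coactions are algebra maps
    -- satisfying coassociativity and the counit law
    (δM : M →ₐ[𝓡] H ⊗[𝓡] M) (δN : N →ₐ[𝓡] H ⊗[𝓡] N)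
    (hδM_coassoc : ∀ m : M,
      (TensorProduct.assoc 𝓡 H H M)
          ((map comul.toLinearMap LinearMap.id) (δM m))
        = (map LinearMap.id δM.toLinearMap) (δM m))
    (hδM_counit : ∀ m : M,
      (TensorProduct.lid 𝓡 M) ((map counit.toLinearMap LinearMap.id) (δM m)) = m)
    (hδN_coassoc : ∀ n : N,
      (TensorProduct.assoc 𝓡 H H N)
          ((map comul.toLinearMap LinearMap.id) (δN n))
        = (map LinearMap.id δN.toLinearMap) (δN n))
    (hδN_counit : ∀ n : N,
      (TensorProduct.lid 𝓡 N) ((map counit.toLinearMap LinearMap.id) (δN n)) = n) :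
    (∀ a b c : M ⊗[𝓡] N,
        mulBr 𝓡 H M N ρ δM.toLinearMap δN.toLinearMap
            ((mulBr 𝓡 H M N ρ δM.toLinearMap δN.toLinearMap (a ⊗ₜ[𝓡] b)) ⊗ₜ[𝓡] c)
          = mulBr 𝓡 H M N ρ δM.toLinearMap δN.toLinearMap
              (a ⊗ₜ[𝓡] (mulBr 𝓡 H M N ρ δM.toLinearMap δN.toLinearMap (b ⊗ₜ[𝓡] c)))) ∧
    (∀ a : M ⊗[𝓡] N,
        mulBr 𝓡 H M N ρ δM.toLinearMap δN.toLinearMap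
            (((1 : M) ⊗ₜ[𝓡] (1 : N)) ⊗ₜ[𝓡] a) = a) ∧
    (∀ a : M ⊗[𝓡] N,
        mulBr 𝓡 H M N ρ δM.toLinearMap δN.toLinearMap
            (a ⊗ₜ[𝓡] ((1 : M) ⊗ₜ[𝓡] (1 : N))) = a) := by
  refine ⟨?_, ?_, ?_⟩
  · -- associativity
    have key : ∀ (x z u : M) (y t v : N),
        mulBr 𝓡 H M N ρ δM.toLinearMap δN.toLinearMap
            ((mulBr 𝓡 H M N ρ δM.toLinearMap δN.toLinearMap
                ((x ⊗ₜ[𝓡] y) ⊗ₜ[𝓡] (z ⊗ₜ[𝓡] t))) ⊗ₜ[𝓡] (u ⊗ₜ[𝓡] v))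
          = mulBr 𝓡 H M N ρ δM.toLinearMap δN.toLinearMap
              ((x ⊗ₜ[𝓡] y) ⊗ₜ[𝓡] (mulBr 𝓡 H M N ρ δM.toLinearMap δN.toLinearMap
                  ((z ⊗ₜ[𝓡] t) ⊗ₜ[𝓡] (u ⊗ₜ[𝓡] v)))) := by
      intro x z u y t v
      rw [mainL comul ρ hmul_right δM δN x z u y t v,
        mainR comul ρ hmul_left δM δN x z u y t v,
        hδM_coassoc u, hδN_coassoc y]
    intro a b c
    induction a using TensorProduct.induction_on with
    | zero => simp
    | add a₁ a₂ ih₁ ih₂ => simp only [add_tmul, map_add, ih₁, ih₂]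
    | tmul x y =>
      induction b using TensorProduct.induction_on with
      | zero => simp
      | add b₁ b₂ ih₁ ih₂ =>
        simp only [add_tmul, tmul_add, map_add, ih₁, ih₂]
      | tmul z t =>
        induction c using TensorProduct.induction_on with
        | zero => simp
        | add c₁ c₂ ih₁ ih₂ =>
          simp only [add_tmul, tmul_add, map_add, ih₁, ih₂]
        | tmul u v => exact key x z u y t v
  · exact mulBr_one_left counit ρ δM δN
      (rho_one_right comul counit hcoassoc hcounit_right ρ ρ' hconv_inv_left hmul_right)
      hδM_counit
  · exact mulBr_one_right counit ρ δM δN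
      (rho_one_left comul counit hcoassoc hcounit_right ρ ρ' hconv_inv_left hmul_left)
      hδN_counit
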